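/- arXiv:1512.06780 — 4 statements merged into one kernel-verified Lean document; each statement's English description precedes it below -/
import Mathlib

section
/- The function S(x,t) = x + (1-x)/t + 2/√t satisfies L[S] := ∂ₜS − x²∂ₓₓS − 2S(∂ₓS − 1) = (1−x)/t² + 2x/t + 3t^{−3/2} > 0 for all x ∈ [0,1] and t > 0. -/
/-- The universal supersolution `S(x,t) = x + (1-x)/t + 2/√t`. -/
noncomputable def S (x t : ℝ) : ℝ := x + (1 - x) / t + 2 / Real.sqrt t

lemma S_deriv_t (x t : ℝ) (ht : 0 < t) :
    HasDerivAt (fun τ => S x τ) (-((1 - x) / t ^ 2) - 1 / (t * Real.sqrt t)) t := by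
  have hs : 0 < Real.sqrt t := Real.sqrt_pos.2 ht
  have h1 : HasDerivAt (fun τ : ℝ => (1 - x) / τ) (-((1 - x) / t ^ 2)) t := by
    have := (hasDerivAt_inv ht.ne').const_mul (1 - x)
    refine this.congr_deriv ?_
    ring
  have h2 : HasDerivAt (fun τ : ℝ => 2 / Real.sqrt τ) (-(1 / (t * Real.sqrt t))) t := by
    have hsq := Real.hasDerivAt_sqrt ht.ne'
    have := (hasDerivAt_const t (2:ℝ)).fun_div hsq hs.ne'
    refine this.congr_deriv ?_
    rw [Real.sq_sqrt ht.le]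
    field_simp
    ring
  have := ((hasDerivAt_const t x).fun_add h1).fun_add h2
  simpa [S, sub_eq_add_neg] using this

lemma S_deriv_x (t y : ℝ) :
    HasDerivAt (fun y => S y t) (1 - 1 / t) y := by
  have h1 : HasDerivAt (fun y : ℝ => (1 - y) / t) (-(1 / t)) y := by
    have : HasDerivAt (fun y : ℝ => 1 - y) (-1) y := by
      simpa using (hasDerivAt_const y (1:ℝ)).fun_sub (hasDerivAt_id y)
    simpa [neg_div] using this.div_const t
  have := ((hasDerivAt_id y).fun_add h1).fun_add (hasDerivAt_const y (2 / Real.sqrt t))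
  simpa [S, sub_eq_add_neg] using this

/-- `L[S] = ∂ₜS − x²∂ₓₓS − 2S(∂ₓS − 1) = (1−x)/t² + 2x/t + 3 t^{−3/2} > 0`
for `x ∈ [0,1]`, `t > 0`. -/
theorem stmt_0 (x t : ℝ) (hx : x ∈ Set.Icc (0:ℝ) 1) (ht : 0 < t) :
    deriv (fun τ => S x τ) t - x ^ 2 * deriv (deriv (fun y => S y t)) x
      - 2 * S x t * (deriv (fun y => S y t) x - 1)
      = (1 - x) / t ^ 2 + 2 * x / t + 3 * t ^ (-(3:ℝ)/2) ∧
    0 < (1 - x) / t ^ 2 + 2 * x / t + 3 * t ^ (-(3:ℝ)/2) := by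
  obtain ⟨hx0, hx1⟩ := hx
  have hs : 0 < Real.sqrt t := Real.sqrt_pos.2 ht
  have hdx : deriv (fun y => S y t) = fun _ => 1 - 1 / t := by
    funext y; exact (S_deriv_x t y).deriv
  have hxx : deriv (deriv (fun y => S y t)) x = 0 := by
    rw [hdx]; simp
  have hdt : deriv (fun τ => S x τ) t
      = -((1 - x) / t ^ 2) - 1 / (t * Real.sqrt t) := (S_deriv_t x t ht).deriv
  have hrpow : t ^ (-(3:ℝ)/2) = 1 / (t * Real.sqrt t) := by
    have h32 : t ^ ((3:ℝ)/2) = t * Real.sqrt t := by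
      rw [Real.sqrt_eq_rpow, show (3:ℝ)/2 = 1 + 1/2 by ring, Real.rpow_add ht, Real.rpow_one]
    rw [show (-(3:ℝ)/2) = -(3/2) by ring, Real.rpow_neg ht.le, h32, one_div]
  constructor
  · rw [hdt, hxx, hdx, hrpow, S]
    have hts : t * Real.sqrt t ≠ 0 := by positivity
    have hss : Real.sqrt t * Real.sqrt t = t := Real.mul_self_sqrt ht.le
    field_simp
    nlinarith [sq_nonneg (Real.sqrt t), hss, ht, hs]
  · have h1 : 0 ≤ (1 - x) / t ^ 2 := div_nonneg (by linarith) (by positivity)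
    have h2 : 0 ≤ 2 * x / t := div_nonneg (by linarith) ht.le
    have h3 : 0 < 3 * t ^ (-(3:ℝ)/2) := by positivity
    linarith
end

section
/- If a C¹ function n on (0,1] is nonnegative, not identically zero, and satisfies x² n′(x) − 2x n(x) + n(x)² = 0 wherever n(x) > 0, with 0 ≤ n(x) ≤ x, then there exists μ ≥ 0 such that n(x) = x²/(x+μ) for all x ∈ (0,1]. -/
/-- Classification of equilibria: a nonnegative, not identically zero `C¹` function on
`(0,1]` with `0 ≤ n(x) ≤ x` satisfying the zero-flux equation
`x² n′ − 2x n + n² = 0` wherever `n > 0` must be `n_μ(x) = x²/(x+μ)` for some `μ ≥ 0`. -/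
theorem stmt_4 (n n' : ℝ → ℝ)
    (hderiv : ∀ x ∈ Set.Ioc (0:ℝ) 1, HasDerivAt n (n' x) x)
    (hcont : ContinuousOn n' (Set.Ioc (0:ℝ) 1))
    (hbd : ∀ x ∈ Set.Ioc (0:ℝ) 1, 0 ≤ n x ∧ n x ≤ x)
    (hne : ∃ x ∈ Set.Ioc (0:ℝ) 1, n x ≠ 0)
    (hflux : ∀ x ∈ Set.Ioc (0:ℝ) 1, 0 < n x →
      x ^ 2 * n' x - 2 * x * n x + (n x) ^ 2 = 0) :
    ∃ μ : ℝ, 0 ≤ μ ∧ ∀ x ∈ Set.Ioc (0:ℝ) 1, n x = x ^ 2 / (x + μ) := by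
  obtain ⟨x₀, hx₀s, hx₀⟩ := hne
  have hn0 : 0 < n x₀ := lt_of_le_of_ne (hbd x₀ hx₀s).1 (Ne.symm hx₀)
  set μ : ℝ := x₀ ^ 2 / n x₀ - x₀ with hμdef
  have hμ : 0 ≤ μ := by
    have h1 : n x₀ ≤ x₀ := (hbd x₀ hx₀s).2
    have h2 : x₀ ≤ x₀ ^ 2 / n x₀ := by
      rw [le_div_iff₀ hn0]; nlinarith [hx₀s.1]
    simp only [hμdef]; linarith
  refine ⟨μ, hμ, ?_⟩
  set m : ℝ → ℝ := fun y => y ^ 2 / (y + μ) with hm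
  -- derivative of g = id - x²/n is zero where n > 0
  have hg : ∀ y ∈ Set.Ioc (0:ℝ) 1, 0 < n y →
      HasDerivAt (fun z => z - z ^ 2 / n z) 0 y := by
    intro y hy hny
    have h2 : HasDerivAt (fun z : ℝ => z ^ 2) (2 * y) y := by
      simpa using (hasDerivAt_pow 2 y)
    have h3 := h2.div (hderiv y hy) (ne_of_gt hny)
    have h4 : (2 * y * n y - y ^ 2 * n' y) / n y ^ 2 = 1 := by
      have hf := hflux y hy hny
      field_simp
      nlinarith [hf]
    rw [h4] at h3
    have h5 := (hasDerivAt_id y).sub h3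
    rw [sub_self] at h5
    exact h5
  -- n x₀ = m x₀
  have hx₀m : n x₀ = m x₀ := by
    have hx0 : (0:ℝ) < x₀ := hx₀s.1
    simp only [hm, hμdef]
    rw [eq_div_iff]
    · field_simp
      ring
    · have h5 : x₀ + (x₀ ^ 2 / n x₀ - x₀) = x₀ ^ 2 / n x₀ := by ring
      rw [h5]
      exact ne_of_gt (div_pos (pow_pos hx0 2) hn0)
  -- key: around a point where n = m, n = m on a neighborhood (within (0,1])
  have hkey : ∀ x, x ∈ Set.Ioc (0:ℝ) 1 ∧ n x = m x →
      ∃ U : Set ℝ, IsOpen U ∧ x ∈ U ∧ ∀ y ∈ U ∩ Set.Ioc (0:ℝ) 1, n y = m y := by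
    rintro x ⟨hxs, hxm⟩
    have hx0 : (0:ℝ) < x := hxs.1
    have hxμ : (0:ℝ) < x + μ := by linarith
    have hxpos : 0 < n x := by
      rw [hxm]; exact div_pos (pow_pos hx0 2) hxμ
    have hev : ∀ᶠ y in nhds x, 0 < n y :=
      (hderiv x hxs).continuousAt.eventually (eventually_gt_nhds hxpos)
    obtain ⟨ε, hε, hball⟩ := Metric.eventually_nhds_iff_ball.mp hev
    refine ⟨Metric.ball x ε, Metric.isOpen_ball, Metric.mem_ball_self hε, ?_⟩
    rintro y ⟨hyb, hys⟩
    have hy0 : (0:ℝ) < y := hys.1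
    have hyμ : (0:ℝ) < y + μ := by linarith
    have hypos : 0 < n y := hball y hyb
    have hyx := abs_lt.mp (by simpa [Real.dist_eq] using hyb)
    set a := min x y with ha
    set b := max x y with hb
    have hsub : Set.Icc a b ⊆ Metric.ball x ε ∩ Set.Ioc (0:ℝ) 1 := by
      rintro z ⟨hz1, hz2⟩
      have hab1 : x - ε < a := lt_min (by linarith) (by linarith)
      have hab2 : b < x + ε := max_lt (by linarith) (by linarith)
      refine ⟨?_, ?_, ?_⟩
      · rw [Metric.mem_ball, Real.dist_eq, abs_lt]; constructor <;> linarith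
      · have : (0:ℝ) < a := lt_min hx0 hy0
        linarith
      · have : b ≤ 1 := max_le hxs.2 hys.2
        linarith
    have hgc : ∀ z ∈ Set.Icc a b, (fun w => w - w ^ 2 / n w) z =
        (fun w => w - w ^ 2 / n w) a := by
      apply constant_of_has_deriv_right_zero
      · intro z hz
        exact (continuousAt_id.sub (((continuous_pow 2).continuousAt).div
          (hderiv z (hsub hz).2).continuousAt (ne_of_gt (hball z (hsub hz).1)))).continuousWithinAt
      · intro w hw
        have hw' := hsub (Set.Ico_subset_Icc_self hw)
        exact (hg w hw'.2 (hball w hw'.1)).hasDerivWithinAt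
    have hxI : x ∈ Set.Icc a b := ⟨min_le_left _ _, le_max_left _ _⟩
    have hyI : y ∈ Set.Icc a b := ⟨min_le_right _ _, le_max_right _ _⟩
    have hgy : y - y ^ 2 / n y = x - x ^ 2 / n x := by
      have := (hgc y hyI).trans (hgc x hxI).symm
      simpa using this
    have hgx : x - x ^ 2 / n x = -μ := by
      rw [hxm]
      have hx2 : (x:ℝ) ^ 2 ≠ 0 := by positivity
      have : (x:ℝ) ^ 2 / ((x:ℝ) ^ 2 / (x + μ)) = x + μ := by
        field_simp
      simp only [hm]
      rw [this]; ring
    have h6 : y ^ 2 / n y = y + μ := by rw [hgx] at hgy; linarith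
    have h7 : y ^ 2 = n y * (y + μ) := by
      rw [← h6]; field_simp
    simp only [hm]
    rw [eq_div_iff (ne_of_gt hyμ)]
    linarith [h7]
  -- around a point where n ≠ m, n ≠ m on a neighborhood
  have hkey2 : ∀ x, x ∈ Set.Ioc (0:ℝ) 1 ∧ n x ≠ m x →
      ∃ U : Set ℝ, IsOpen U ∧ x ∈ U ∧ ∀ y ∈ U, n y ≠ m y := by
    rintro x ⟨hxs, hxm⟩
    have hx0 : (0:ℝ) < x := hxs.1
    have hmcont : ContinuousAt m x := by
      apply ContinuousAt.div
      · exact (continuous_pow 2).continuousAt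
      · exact continuousAt_id.add continuousAt_const
      · exact ne_of_gt (by linarith)
    have hF : ContinuousAt (fun y => n y - m y) x :=
      (hderiv x hxs).continuousAt.sub hmcont
    have hev : ∀ᶠ y in nhds x, n y - m y ≠ 0 :=
      hF.eventually_ne (sub_ne_zero.mpr hxm)
    obtain ⟨t, ht, hto, hxt⟩ := eventually_nhds_iff.mp hev
    exact ⟨t, hto, hxt, fun y hy => sub_ne_zero.mp (ht y hy)⟩
  -- connectedness argument
  intro x hx
  by_contra hnx
  choose! U hUo hUx hU using hkey
  choose! V hVo hVx hV using hkey2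
  set A := {w : ℝ | w ∈ Set.Ioc (0:ℝ) 1 ∧ n w = m w} with hA
  set B := {w : ℝ | w ∈ Set.Ioc (0:ℝ) 1 ∧ n w ≠ m w} with hB
  have h1 : IsOpen (⋃ w ∈ A, U w) := isOpen_biUnion (fun w hw => hUo w hw)
  have h2 : IsOpen (⋃ w ∈ B, V w) := isOpen_biUnion (fun w hw => hVo w hw)
  have hcover : Set.Ioc (0:ℝ) 1 ⊆ (⋃ w ∈ A, U w) ∪ (⋃ w ∈ B, V w) := by
    intro w hw
    by_cases h : n w = m w
    · exact Or.inl (Set.mem_biUnion (⟨hw, h⟩ : w ∈ A) (hUx w ⟨hw, h⟩))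
    · exact Or.inr (Set.mem_biUnion (⟨hw, h⟩ : w ∈ B) (hVx w ⟨hw, h⟩))
  have hne1 : (Set.Ioc (0:ℝ) 1 ∩ ⋃ w ∈ A, U w).Nonempty :=
    ⟨x₀, hx₀s, Set.mem_biUnion (⟨hx₀s, hx₀m⟩ : x₀ ∈ A) (hUx x₀ ⟨hx₀s, hx₀m⟩)⟩
  have hne2 : (Set.Ioc (0:ℝ) 1 ∩ ⋃ w ∈ B, V w).Nonempty :=
    ⟨x, hx, Set.mem_biUnion (⟨hx, hnx⟩ : x ∈ B) (hVx x ⟨hx, hnx⟩)⟩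
  obtain ⟨w, hws, hw1, hw2⟩ :=
    isPreconnected_Ioc (a := (0:ℝ)) (b := 1) _ _ h1 h2 hcover hne1 hne2
  obtain ⟨p, hpA, hwp⟩ := Set.mem_iUnion₂.mp hw1
  obtain ⟨q, hqB, hwq⟩ := Set.mem_iUnion₂.mp hw2
  exact (hV q hqB w hwq) (hU p hpA w ⟨hwp, hws⟩)
end

section
/- Let m(ξ,l) = (1 + l² + ξ⁴)^{1/2} on ℝ². For real α, β with 0 ≤ α < 2β and β ≥ 1, the function A_{α,β}(ξ,l) = |ξ|^α / m(ξ,l)^β belongs to L^s(ℝ²) if and only if s > max{3/(2β−α), 1/β}. -/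
open MeasureTheory Real Set

/-- The anisotropic multiplier `m(ξ,l) = (1 + l² + ξ⁴)^{1/2}`. -/
noncomputable def mWeight (p : ℝ × ℝ) : ℝ := Real.sqrt (1 + p.2 ^ 2 + p.1 ^ 4)

/-- Two-sided power bounds on `(1,∞)`. -/
lemma ptBounds (a q : ℝ) (k : ℕ) {x : ℝ} (hx : 1 < x) :
    min (2 ^ (-q)) 1 * x ^ (a - k * q) ≤ |x| ^ a * (1 + x ^ k) ^ (-q) ∧
    |x| ^ a * (1 + x ^ k) ^ (-q) ≤ max (2 ^ (-q)) 1 * x ^ (a - k * q) := by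
  have hx0 : (0:ℝ) < x := one_pos.trans hx
  have hxk : (1:ℝ) ≤ x ^ k := one_le_pow₀ hx.le
  have hxk0 : (0:ℝ) < x ^ k := by linarith
  have h1 : (0:ℝ) < 1 + x ^ k := by linarith
  have h2 : 1 + x ^ k ≤ 2 * x ^ k := by linarith
  have e1 : ((2:ℝ) * x ^ k) ^ (-q) = 2 ^ (-q) * (x ^ k) ^ (-q) :=
    Real.mul_rpow (by norm_num) hxk0.le
  have hnn : (0:ℝ) ≤ (x ^ k) ^ (-q) := Real.rpow_nonneg hxk0.le _
  have key : min (2 ^ (-q)) 1 * (x ^ k) ^ (-q) ≤ (1 + x ^ k) ^ (-q) ∧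
      (1 + x ^ k) ^ (-q) ≤ max (2 ^ (-q)) 1 * (x ^ k) ^ (-q) := by
    rcases le_or_gt 0 q with hq | hq
    · have hql : -q ≤ 0 := by linarith
      have l1 : ((2:ℝ) * x ^ k) ^ (-q) ≤ (1 + x ^ k) ^ (-q) :=
        Real.rpow_le_rpow_of_nonpos h1 h2 hql
      have l2 : (1 + x ^ k) ^ (-q) ≤ (x ^ k) ^ (-q) :=
        Real.rpow_le_rpow_of_nonpos hxk0 (by linarith) hql
      constructor
      · calc min (2 ^ (-q)) 1 * (x ^ k) ^ (-q) ≤ 2 ^ (-q) * (x ^ k) ^ (-q) :=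
            mul_le_mul_of_nonneg_right (min_le_left _ _) hnn
          _ = (2 * x ^ k) ^ (-q) := e1.symm
          _ ≤ _ := l1
      · calc (1 + x ^ k) ^ (-q) ≤ (x ^ k) ^ (-q) := l2
          _ = 1 * (x ^ k) ^ (-q) := (one_mul _).symm
          _ ≤ max (2 ^ (-q)) 1 * (x ^ k) ^ (-q) :=
            mul_le_mul_of_nonneg_right (le_max_right _ _) hnn
    · have hql : 0 ≤ -q := by linarith
      have l1 : (x ^ k) ^ (-q) ≤ (1 + x ^ k) ^ (-q) :=
        Real.rpow_le_rpow hxk0.le (by linarith) hql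
      have l2 : (1 + x ^ k) ^ (-q) ≤ (2 * x ^ k) ^ (-q) :=
        Real.rpow_le_rpow h1.le h2 hql
      constructor
      · calc min (2 ^ (-q)) 1 * (x ^ k) ^ (-q) ≤ 1 * (x ^ k) ^ (-q) :=
            mul_le_mul_of_nonneg_right (min_le_right _ _) hnn
          _ = (x ^ k) ^ (-q) := one_mul _
          _ ≤ _ := l1
      · calc (1 + x ^ k) ^ (-q) ≤ (2 * x ^ k) ^ (-q) := l2
          _ = 2 ^ (-q) * (x ^ k) ^ (-q) := e1
          _ ≤ max (2 ^ (-q)) 1 * (x ^ k) ^ (-q) :=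
            mul_le_mul_of_nonneg_right (le_max_left _ _) hnn
  have habs : |x| ^ a = x ^ a := by rw [abs_of_pos hx0]
  have hsplit : x ^ (a - k * q) = x ^ a * (x ^ k) ^ (-q) := by
    rw [← Real.rpow_natCast x k, ← Real.rpow_mul hx0.le, ← Real.rpow_add hx0]
    congr 1; ring
  have hxa : (0:ℝ) ≤ x ^ a := Real.rpow_nonneg hx0.le _
  constructor
  · rw [habs, hsplit]
    calc min (2 ^ (-q)) 1 * (x ^ a * (x ^ k) ^ (-q))
        = x ^ a * (min (2 ^ (-q)) 1 * (x ^ k) ^ (-q)) := by ring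
      _ ≤ x ^ a * (1 + x ^ k) ^ (-q) := mul_le_mul_of_nonneg_left key.1 hxa
  · rw [habs, hsplit]
    calc x ^ a * (1 + x ^ k) ^ (-q) ≤ x ^ a * (max (2 ^ (-q)) 1 * (x ^ k) ^ (-q)) :=
        mul_le_mul_of_nonneg_left key.2 hxa
      _ = max (2 ^ (-q)) 1 * (x ^ a * (x ^ k) ^ (-q)) := by ring

/-- One-dimensional integrability criterion. -/
lemma oneDim {a q : ℝ} (ha : 0 ≤ a) (k : ℕ) (hk : Even k) (hk0 : k ≠ 0) :
    Integrable (fun x : ℝ => |x| ^ a * (1 + x ^ k) ^ (-q)) ↔ a - k * q < -1 := by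
  set f := fun x : ℝ => |x| ^ a * (1 + x ^ k) ^ (-q) with hf
  have hbase : ∀ x : ℝ, (0:ℝ) < 1 + x ^ k := by
    intro x
    have := hk.pow_nonneg x
    linarith
  have hfc : Continuous f := by
    apply Continuous.mul
    · exact continuous_abs.rpow_const fun x => Or.inr ha
    · exact (continuous_const.add (continuous_pow k)).rpow_const
        fun x => Or.inl (hbase x).ne'
  have hfnn : ∀ x, 0 ≤ f x := fun x =>
    mul_nonneg (Real.rpow_nonneg (abs_nonneg x) a) (Real.rpow_nonneg (hbase x).le _)
  constructor
  · intro hint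
    have h1 : IntegrableOn f (Ioi 1) := hint.integrableOn
    set C := min ((2:ℝ) ^ (-q)) (1:ℝ) with hC
    have hCpos : 0 < C := lt_min (Real.rpow_pos_of_pos two_pos _) one_pos
    have h2 : IntegrableOn (fun x : ℝ => C * x ^ (a - k * q)) (Ioi 1) := by
      apply Integrable.mono' h1
      · refine (ContinuousOn.aestronglyMeasurable ?_ measurableSet_Ioi)
        intro x hx
        have hx0 : x ≠ 0 := by
          have : (1:ℝ) < x := hx
          positivity
        exact (continuousAt_const.mul
          (Real.continuousAt_rpow_const x _ (Or.inl hx0))).continuousWithinAt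
      · filter_upwards [ae_restrict_mem measurableSet_Ioi] with x hx
        have hx1 : (1:ℝ) < x := hx
        rw [Real.norm_eq_abs, abs_of_nonneg
          (mul_nonneg hCpos.le (Real.rpow_nonneg (by linarith) _))]
        exact (ptBounds a q k hx1).1
    have h3 : IntegrableOn (fun x : ℝ => x ^ (a - k * q)) (Ioi 1) := by
      have h4 := h2.const_mul C⁻¹
      have h5 : Integrable (fun x : ℝ => x ^ (a - k * q)) (volume.restrict (Ioi 1)) := by
        simpa [← mul_assoc, inv_mul_cancel₀ hCpos.ne'] using h4
      exact h5
    exact (integrableOn_Ioi_rpow_iff one_pos).mp h3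
  · intro he
    have hIoi : IntegrableOn f (Ioi 1) := by
      have hpow : IntegrableOn (fun x : ℝ => x ^ (a - k * q)) (Ioi 1) :=
        integrableOn_Ioi_rpow_of_lt he one_pos
      apply Integrable.mono' (hpow.const_mul (max ((2:ℝ) ^ (-q)) 1))
        hfc.aestronglyMeasurable.restrict
      filter_upwards [ae_restrict_mem measurableSet_Ioi] with x hx
      rw [Real.norm_eq_abs, abs_of_nonneg (hfnn x)]
      exact (ptBounds a q k hx).2
    have hIci : IntegrableOn f (Ici 1) := by
      rwa [integrableOn_Ici_iff_integrableOn_Ioi]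
    have hIcc : IntegrableOn f (Icc (-1) 1) := hfc.integrableOn_Icc
    have heven : ∀ x, f (-x) = f x := by
      intro x
      simp [hf, hk.neg_pow]
    have hIic : IntegrableOn f (Iic (-1)) := by
      have h4 : Integrable ((Ici (1:ℝ)).indicator f) :=
        (integrable_indicator_iff measurableSet_Ici).2 hIci
      have h5 : Integrable (fun x : ℝ => ((Ici (1:ℝ)).indicator f) (-1 * x)) :=
        (integrable_comp_mul_left_iff _ (by norm_num : (-1:ℝ) ≠ 0)).2 h4
      have hind : (fun x : ℝ => ((Ici (1:ℝ)).indicator f) (-1 * x)) =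
          (Iic (-1:ℝ)).indicator f := by
        funext x
        by_cases hx : x ≤ -1
        · rw [Set.indicator_of_mem (mem_Ici.mpr (by linarith : (1:ℝ) ≤ -1 * x)),
            Set.indicator_of_mem (mem_Iic.mpr hx),
            show (-1:ℝ) * x = -x by ring, heven]
        · have hmem1 : (-1:ℝ) * x ∉ Ici (1:ℝ) := by
            simp only [mem_Ici, not_le]
            have := not_le.mp hx
            linarith
          have hmem2 : x ∉ Iic (-1:ℝ) := by simpa using hx
          rw [Set.indicator_of_notMem hmem1, Set.indicator_of_notMem hmem2]
      rw [hind] at h5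
      exact (integrable_indicator_iff measurableSet_Iic).1 h5
    rw [← integrableOn_univ,
      show (univ : Set ℝ) = Iic (-1) ∪ (Icc (-1) 1 ∪ Ici 1) by
        rw [Set.Icc_union_Ici_eq_Ici (by norm_num : (-1:ℝ) ≤ 1), Set.Iic_union_Ici]]
    exact hIic.union (hIcc.union hIci)

lemma sliceAux (c B : ℝ) (hc : 0 < c) (l : ℝ) :
    (c + l ^ 2) ^ (-B) = c ^ (-B) * (1 + ((Real.sqrt c)⁻¹ * l) ^ 2) ^ (-B) := by
  have hs2 : Real.sqrt c ^ 2 = c := Real.sq_sqrt hc.le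
  have h2 : ((Real.sqrt c)⁻¹ * l) ^ 2 = l ^ 2 / c := by
    rw [mul_pow, inv_pow, hs2, inv_mul_eq_div]
  have hbase : c + l ^ 2 = c * (1 + ((Real.sqrt c)⁻¹ * l) ^ 2) := by
    rw [h2, mul_add, mul_one, mul_div_cancel₀ _ hc.ne']
  rw [hbase, Real.mul_rpow hc.le (by positivity)]

lemma slice_int (c B : ℝ) (hc : 0 < c) :
    Integrable (fun l : ℝ => (c + l ^ 2) ^ (-B)) ↔ 1 / 2 < B := by
  have hsc : 0 < Real.sqrt c := Real.sqrt_pos.2 hc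
  have e2 : Integrable (fun l : ℝ => (c + l ^ 2) ^ (-B)) ↔
      Integrable (fun l : ℝ => (1 + ((Real.sqrt c)⁻¹ * l) ^ 2) ^ (-B)) := by
    rw [show (fun l : ℝ => (c + l ^ 2) ^ (-B)) =
        fun l : ℝ => c ^ (-B) * (1 + ((Real.sqrt c)⁻¹ * l) ^ 2) ^ (-B)
      from funext (sliceAux c B hc)]
    exact integrable_const_mul_iff
      (isUnit_iff_ne_zero.2 (Real.rpow_pos_of_pos hc _).ne') _
  have e3 := integrable_comp_mul_left_iff (fun t : ℝ => (1 + t ^ 2) ^ (-B))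
    (inv_ne_zero hsc.ne')
  have e4 : Integrable (fun x : ℝ => (1 + x ^ 2) ^ (-B)) ↔ 1 / 2 < B := by
    have h := oneDim (a := 0) (q := B) le_rfl 2 even_two two_ne_zero
    simp only [Real.rpow_zero, one_mul] at h
    rw [h]
    push_cast
    constructor <;> intro <;> linarith
  exact e2.trans (e3.trans e4)

lemma slice_eval (c B : ℝ) (hc : 0 < c) :
    ∫ l : ℝ, (c + l ^ 2) ^ (-B) = c ^ (1 / 2 - B) * ∫ t : ℝ, (1 + t ^ 2) ^ (-B) := by
  have hsc : 0 < Real.sqrt c := Real.sqrt_pos.2 hc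
  simp_rw [sliceAux c B hc]
  rw [integral_const_mul]
  rw [show (∫ l : ℝ, (1 + ((Real.sqrt c)⁻¹ * l) ^ 2) ^ (-B))
      = |((Real.sqrt c)⁻¹)⁻¹| • ∫ t : ℝ, (1 + t ^ 2) ^ (-B) from
    MeasureTheory.Measure.integral_comp_mul_left (fun t : ℝ => (1 + t ^ 2) ^ (-B)) _]
  rw [inv_inv, abs_of_pos hsc, smul_eq_mul, ← mul_assoc]
  congr 1
  rw [Real.sqrt_eq_rpow, ← Real.rpow_add hc]
  congr 1
  ring

/-- For `0 ≤ α < 2β`, `β ≥ 1`, and `s > 0`, the function `|ξ|^α / m(ξ,l)^β` is in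
`L^s(ℝ²)` if and only if `s > max{3/(2β−α), 1/β}`. -/
theorem stmt_10 (α β : ℝ) (hα : 0 ≤ α) (hαβ : α < 2 * β) (hβ : 1 ≤ β)
    (s : ℝ) (hs : 0 < s) :
    MeasureTheory.MemLp (fun p : ℝ × ℝ => |p.1| ^ α / (mWeight p) ^ β)
        (ENNReal.ofReal s) MeasureTheory.volume
      ↔ max (3 / (2 * β - α)) (1 / β) < s := by
  have hβ0 : (0:ℝ) < β := by linarith
  have h2βα : (0:ℝ) < 2 * β - α := by linarith
  set A := α * s with hAdef
  set B := β * s / 2 with hBdef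
  have hA : 0 ≤ A := mul_nonneg hα hs.le
  have hMpos : ∀ p : ℝ × ℝ, (0:ℝ) < 1 + p.2 ^ 2 + p.1 ^ 4 := fun p => by positivity
  have hmW : ∀ p : ℝ × ℝ, 0 < mWeight p := fun p => Real.sqrt_pos.2 (hMpos p)
  have hfc : Continuous (fun p : ℝ × ℝ => |p.1| ^ α / mWeight p ^ β) := by
    apply Continuous.div
    · exact (continuous_abs.comp continuous_fst).rpow_const fun _ => Or.inr hα
    · refine Continuous.rpow_const ?_ fun p => Or.inl (hmW p).ne'
      exact Real.continuous_sqrt.comp (by fun_prop)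
    · exact fun p => (Real.rpow_pos_of_pos (hmW p) β).ne'
  have hkey : (fun p : ℝ × ℝ => ‖|p.1| ^ α / mWeight p ^ β‖ ^ s)
      = fun p : ℝ × ℝ => |p.1| ^ A * ((1 + p.1 ^ 4) + p.2 ^ 2) ^ (-B) := by
    funext p
    have hM := hMpos p
    have h1 : mWeight p ^ β = (1 + p.2 ^ 2 + p.1 ^ 4) ^ (β / 2) := by
      rw [mWeight, Real.sqrt_eq_rpow, ← Real.rpow_mul hM.le]
      congr 1; ring
    rw [Real.norm_eq_abs, abs_of_nonneg (div_nonneg (Real.rpow_nonneg (abs_nonneg _) _)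
      (Real.rpow_nonneg (hmW p).le _))]
    rw [h1, Real.div_rpow (Real.rpow_nonneg (abs_nonneg _) _) (Real.rpow_nonneg hM.le _),
      ← Real.rpow_mul (abs_nonneg _), ← Real.rpow_mul hM.le,
      div_eq_mul_inv, ← Real.rpow_neg hM.le,
      show 1 + p.2 ^ 2 + p.1 ^ 4 = 1 + p.1 ^ 4 + p.2 ^ 2 by ring,
      show β / 2 * s = B by rw [hBdef]; ring]
  have h0 : (ENNReal.ofReal s) ≠ 0 := by
    intro h
    rw [ENNReal.ofReal_eq_zero] at h
    linarith
  have hmem := memLp_norm_rpow_iff (μ := (volume : Measure (ℝ × ℝ)))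
    (p := ENNReal.ofReal s) hfc.aestronglyMeasurable h0 ENNReal.ofReal_ne_top
  rw [ENNReal.div_self h0 ENNReal.ofReal_ne_top, ENNReal.toReal_ofReal hs.le] at hmem
  rw [← hmem, memLp_one_iff_integrable, hkey, MeasureTheory.Measure.volume_eq_prod]
  have hgc : Continuous (fun p : ℝ × ℝ => |p.1| ^ A * ((1 + p.1 ^ 4) + p.2 ^ 2) ^ (-B)) := by
    apply Continuous.mul
    · exact (continuous_abs.comp continuous_fst).rpow_const fun _ => Or.inr hA
    · refine Continuous.rpow_const (by fun_prop) fun p => Or.inl ?_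
      positivity
  rw [integrable_prod_iff hgc.aestronglyMeasurable]
  have hcpos : ∀ x : ℝ, (0:ℝ) < 1 + x ^ 4 := fun x => by positivity
  by_cases hB2 : 1 / 2 < B
  · have hslice : ∀ x : ℝ,
        Integrable (fun y : ℝ => |x| ^ A * ((1 + x ^ 4) + y ^ 2) ^ (-B)) :=
      fun x => ((slice_int _ B (hcpos x)).2 hB2).const_mul _
    have hKint : Integrable (fun t : ℝ => (1 + t ^ 2) ^ (-B)) :=
      (slice_int 1 B one_pos).2 hB2
    set K := ∫ t : ℝ, (1 + t ^ 2) ^ (-B) with hK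
    have hKpos : 0 < K := by
      rw [hK, integral_pos_iff_support_of_nonneg_ae
        (ae_of_all _ fun t : ℝ => Real.rpow_nonneg (by positivity) (-B)) hKint]
      rw [show Function.support (fun t : ℝ => (1 + t ^ 2) ^ (-B)) = univ by
        ext t
        simp only [Function.mem_support, mem_univ, iff_true]
        exact (Real.rpow_pos_of_pos (by positivity) _).ne']
      simp
    have hnorm_eq : (fun x : ℝ => ∫ y : ℝ, ‖|x| ^ A * ((1 + x ^ 4) + y ^ 2) ^ (-B)‖)
        = fun x : ℝ => K * (|x| ^ A * (1 + x ^ 4) ^ (-(B - 1 / 2))) := by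
      funext x
      have h1 : ∀ y : ℝ, ‖|x| ^ A * ((1 + x ^ 4) + y ^ 2) ^ (-B)‖
          = |x| ^ A * ((1 + x ^ 4) + y ^ 2) ^ (-B) := fun y => by
        rw [Real.norm_eq_abs, abs_of_nonneg]
        positivity
      simp_rw [h1]
      rw [integral_const_mul, slice_eval _ B (hcpos x),
        show (1 / 2 - B : ℝ) = -(B - 1 / 2) by ring, ← hK]
      ring
    constructor
    · rintro ⟨-, h2'⟩
      have h2 : Integrable
          (fun x : ℝ => ∫ y : ℝ, ‖|x| ^ A * ((1 + x ^ 4) + y ^ 2) ^ (-B)‖) := h2'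
      rw [hnorm_eq] at h2
      have h3 : Integrable (fun x : ℝ => |x| ^ A * (1 + x ^ 4) ^ (-(B - 1 / 2))) :=
        (integrable_const_mul_iff (isUnit_iff_ne_zero.2 hKpos.ne') _).1 h2
      have h4 := (oneDim hA 4 (by decide) (by norm_num)).1 h3
      push_cast at h4
      rw [hAdef, hBdef] at h4
      rw [max_lt_iff]
      constructor
      · rw [div_lt_iff₀ h2βα]
        nlinarith
      · rw [div_lt_iff₀ hβ0]
        rw [hBdef] at hB2
        nlinarith
    · intro h
      rw [max_lt_iff] at h
      obtain ⟨h1, -⟩ := h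
      rw [div_lt_iff₀ h2βα] at h1
      refine ⟨ae_of_all _ hslice, ?_⟩
      show Integrable (fun x : ℝ => ∫ y : ℝ, ‖|x| ^ A * ((1 + x ^ 4) + y ^ 2) ^ (-B)‖)
      rw [hnorm_eq]
      apply Integrable.const_mul
      apply (oneDim hA 4 (by decide) (by norm_num)).2
      push_cast
      rw [hAdef, hBdef]
      nlinarith
  · push_neg at hB2
    constructor
    · rintro ⟨h1, -⟩
      exfalso
      have hne : ∀ᵐ x : ℝ ∂(volume : Measure ℝ), x ≠ 0 := by
        rw [ae_iff, show {a : ℝ | ¬ a ≠ 0} = {0} by ext x; simp]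
        exact measure_singleton 0
      obtain ⟨x, hxint', hx0⟩ := (h1.and hne).exists
      have hxint : Integrable
          (fun y : ℝ => |x| ^ A * ((1 + x ^ 4) + y ^ 2) ^ (-B)) := hxint'
      have h5 : Integrable (fun y : ℝ => ((1 + x ^ 4) + y ^ 2) ^ (-B)) := by
        refine (integrable_const_mul_iff (isUnit_iff_ne_zero.2 ?_) _).1 hxint
        exact (Real.rpow_pos_of_pos (abs_pos.2 hx0) A).ne'
      have h6 := (slice_int _ B (hcpos x)).1 h5
      linarith
    · intro h
      exfalso
      rw [max_lt_iff] at h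
      obtain ⟨-, h2⟩ := h
      rw [div_lt_iff₀ hβ0] at h2
      rw [hBdef] at hB2
      linarith
end

section
/- Let m(ξ,l) = (1 + l² + ξ⁴)^{1/2} and V(x) = min{|x|, 1}. There is a constant C > 0 such that for all r > 0, ‖m^{−1}·V(rξ)‖_{L²(ℝ²)} + ‖m^{−1}·V(r²l)‖_{L²(ℝ²)} ≤ C·r^{1/2}. -/
open MeasureTheory Real Set
open scoped ENNReal NNReal

lemma lint_cauchy {b : ℝ} (hb : 0 < b) :
    ∫⁻ x : ℝ, ENNReal.ofReal ((b ^ 2 + x ^ 2)⁻¹) = ENNReal.ofReal (π / b) := by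
  have hfun : (fun x : ℝ => (b ^ 2 + x ^ 2)⁻¹)
      = fun x : ℝ => b⁻¹ * b⁻¹ * (1 + (b⁻¹ * x) ^ 2)⁻¹ := by
    funext x
    have hb2 : (b:ℝ)^2 ≠ 0 := by positivity
    field_simp
  have hint : Integrable (fun x : ℝ => b⁻¹ * b⁻¹ * (1 + (b⁻¹ * x) ^ 2)⁻¹) :=
    (integrable_inv_one_add_sq.comp_mul_left' (inv_ne_zero hb.ne')).const_mul _
  have hval : ∫ x : ℝ, (b ^ 2 + x ^ 2)⁻¹ = π / b := by
    rw [hfun, MeasureTheory.integral_const_mul _ _,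
      Measure.integral_comp_mul_left (fun y : ℝ => (1 + y ^ 2)⁻¹) b⁻¹,
      integral_univ_inv_one_add_sq]
    rw [inv_inv, abs_of_pos hb, smul_eq_mul]
    field_simp
  rw [← hval, ← ofReal_integral_eq_lintegral_ofReal]
  · rw [hfun]; exact hint
  · filter_upwards with x; positivity

lemma meas_tail_fun : Measurable fun x : ℝ => ENNReal.ofReal (|x| ^ (-(3/2) : ℝ)) := by
  fun_prop

lemma lint_tail {M : ℝ} (hM : 0 < M) :
    ∫⁻ x : ℝ in (Icc (-M) M)ᶜ, ENNReal.ofReal (|x| ^ (-(3/2) : ℝ))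
      = ENNReal.ofReal (4 * M ^ (-(1/2) : ℝ)) := by
  have hset : (Icc (-M) M)ᶜ = Iio (-M) ∪ Ioi M := by
    ext x
    simp only [mem_compl_iff, mem_Icc, not_and_or, not_le, mem_union, mem_Iio, mem_Ioi]
  have hIoi : ∫⁻ x : ℝ in Ioi M, ENNReal.ofReal (|x| ^ (-(3/2) : ℝ))
      = ENNReal.ofReal (2 * M ^ (-(1/2) : ℝ)) := by
    have hcongr : ∫⁻ x : ℝ in Ioi M, ENNReal.ofReal (|x| ^ (-(3/2) : ℝ))
        = ∫⁻ x : ℝ in Ioi M, ENNReal.ofReal (x ^ (-(3/2) : ℝ)) := by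
      refine setLIntegral_congr_fun measurableSet_Ioi ?_
      intro x hx
      simp only [abs_of_pos (hM.trans hx)]
    rw [hcongr, ← ofReal_integral_eq_lintegral_ofReal]
    · rw [integral_Ioi_rpow_of_lt (by norm_num) hM]
      norm_num
      rw [div_eq_mul_inv, ENNReal.ofReal_mul (by positivity)]
      norm_num
      exact mul_comm _ _
    · exact integrableOn_Ioi_rpow_of_lt (by norm_num) hM
    · filter_upwards [ae_restrict_mem measurableSet_Ioi] with x hx
      have hx0 : (0:ℝ) < x := hM.trans hx
      positivity
  have hIio : ∫⁻ x : ℝ in Iio (-M), ENNReal.ofReal (|x| ^ (-(3/2) : ℝ))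
      = ENNReal.ofReal (2 * M ^ (-(1/2) : ℝ)) := by
    have hmap : ∫⁻ x : ℝ in Iio (-M), ENNReal.ofReal (|x| ^ (-(3/2) : ℝ))
        = ∫⁻ x : ℝ in Neg.neg ⁻¹' (Iio (-M)), ENNReal.ofReal (|(-x : ℝ)| ^ (-(3/2) : ℝ)) := by
      conv_lhs => rw [← Measure.map_neg_eq_self (volume : Measure ℝ)]
      exact setLIntegral_map measurableSet_Iio meas_tail_fun measurable_neg
    have hpre : (Neg.neg ⁻¹' (Iio (-M)) : Set ℝ) = Ioi M := by
      ext x; simp [neg_lt_neg_iff]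
    rw [hmap, hpre, ← hIoi]
    simp [abs_neg]
  rw [hset, lintegral_union measurableSet_Ioi, hIio, hIoi, ← ENNReal.ofReal_add (by positivity) (by positivity)]
  · ring_nf
  · exact Set.disjoint_left.mpr fun x (hx : x ∈ Iio (-M)) (hx' : x ∈ Ioi M) => by
      simp only [mem_Iio, mem_Ioi] at hx hx'; linarith

lemma eLp_le {f : ℝ × ℝ → ℝ} (hm : AEMeasurable f (volume : Measure (ℝ × ℝ)))
    (hnn : ∀ p, 0 ≤ f p) {A : ℝ} (hA : 0 ≤ A)
    (h : ∫⁻ p, ENNReal.ofReal (f p ^ 2) ≤ ENNReal.ofReal (A ^ 2)) :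
    eLpNorm f 2 volume ≤ ENNReal.ofReal A := by
  rw [eLpNorm_eq_lintegral_rpow_enorm_toReal two_ne_zero ENNReal.ofNat_ne_top]
  have h2 : (2 : ℝ≥0∞).toReal = (2 : ℝ) := by simp
  rw [h2]
  have heq : ∀ p : ℝ × ℝ, ‖f p‖ₑ ^ (2 : ℝ) = ENNReal.ofReal (f p ^ 2) := by
    intro p
    rw [Real.enorm_eq_ofReal (hnn p),
      ENNReal.ofReal_rpow_of_nonneg (hnn p) (by norm_num)]
    norm_num
  simp_rw [heq]
  calc (∫⁻ p, ENNReal.ofReal (f p ^ 2)) ^ (1 / (2:ℝ))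
      ≤ (ENNReal.ofReal (A ^ 2)) ^ (1 / (2:ℝ)) := ENNReal.rpow_le_rpow h (by norm_num)
    _ = ENNReal.ofReal ((A ^ 2) ^ ((1:ℝ)/2)) := by
        rw [ENNReal.ofReal_rpow_of_nonneg (by positivity) (by norm_num)]
    _ = ENNReal.ofReal A := by
        rw [← Real.sqrt_eq_rpow, Real.sqrt_sq hA]

lemma key1 {r : ℝ} (hr : 0 < r) (ξ : ℝ) :
    ENNReal.ofReal (min |r * ξ| 1 ^ 2 * (π / Real.sqrt (1 + ξ ^ 4)))
      ≤ (Icc (-1 : ℝ) 1).indicator (fun _ => ENNReal.ofReal (π * r)) ξ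
        + ENNReal.ofReal (2 * π * ((r⁻¹) ^ 2 + ξ ^ 2)⁻¹) := by
  have hc1 : (1 : ℝ) ≤ Real.sqrt (1 + ξ ^ 4) := by
    have h := Real.sqrt_le_sqrt (show (1:ℝ) ≤ 1 + ξ ^ 4 by nlinarith [pow_two_nonneg (ξ^2)])
    rwa [Real.sqrt_one] at h
  have hmin0 : 0 ≤ min |r * ξ| 1 := le_min (abs_nonneg _) zero_le_one
  by_cases hξ : |ξ| ≤ 1
  · have hmem : ξ ∈ Icc (-1 : ℝ) 1 := by
      rcases abs_le.mp hξ with ⟨h1, h2⟩; exact ⟨h1, h2⟩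
    rw [indicator_of_mem hmem]
    refine le_trans (ENNReal.ofReal_le_ofReal ?_) le_self_add
    have h1 : min |r * ξ| 1 ^ 2 ≤ r := by
      have : min |r * ξ| 1 ^ 2 ≤ |r * ξ| * 1 := by
        rw [pow_two]
        exact mul_le_mul (min_le_left _ _) (min_le_right _ _) hmin0 (abs_nonneg _)
      rw [mul_one] at this
      rw [abs_mul, abs_of_pos hr] at this
      calc min |r * ξ| 1 ^ 2 ≤ r * |ξ| := by rw [abs_mul, abs_of_pos hr]; exact this
        _ ≤ r * 1 := by nlinarith
        _ = r := mul_one r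
    have h2 : π / Real.sqrt (1 + ξ ^ 4) ≤ π := by
      apply div_le_self pi_pos.le hc1
    calc min |r * ξ| 1 ^ 2 * (π / Real.sqrt (1 + ξ ^ 4))
        ≤ r * π := mul_le_mul h1 h2 (by positivity) hr.le
      _ = π * r := mul_comm _ _
  · push_neg at hξ
    refine le_trans (ENNReal.ofReal_le_ofReal ?_) le_add_self
    have hξ2 : (1 : ℝ) ≤ ξ ^ 2 := by
      rw [← sq_abs]; nlinarith [abs_nonneg ξ]
    have hξ2pos : (0 : ℝ) < ξ ^ 2 := by linarith
    have hd : (0 : ℝ) < (r⁻¹) ^ 2 + ξ ^ 2 := by positivity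
    have step1 : min |r * ξ| 1 ^ 2 ≤ min (r ^ 2 * ξ ^ 2) 1 := by
      refine le_min ?_ ?_
      · calc min |r * ξ| 1 ^ 2 ≤ |r * ξ| ^ 2 :=
            pow_le_pow_left₀ hmin0 (min_le_left _ _) 2
          _ = r ^ 2 * ξ ^ 2 := by rw [sq_abs, mul_pow]
      · calc min |r * ξ| 1 ^ 2 ≤ 1 ^ 2 := pow_le_pow_left₀ hmin0 (min_le_right _ _) 2
          _ = 1 := one_pow 2
    have step2 : π / Real.sqrt (1 + ξ ^ 4) ≤ π / ξ ^ 2 := by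
      apply div_le_div_of_nonneg_left pi_pos.le hξ2pos
      rw [show ξ ^ 2 = Real.sqrt ((ξ ^ 2) ^ 2) from (Real.sqrt_sq (by positivity)).symm]
      exact Real.sqrt_le_sqrt (by nlinarith)
    have key : min (r ^ 2 * ξ ^ 2) 1 * ((r⁻¹) ^ 2 + ξ ^ 2) ≤ 2 * ξ ^ 2 := by
      have hrr : r ^ 2 * (r⁻¹) ^ 2 = 1 := by
        field_simp
      rcases le_total (r ^ 2 * ξ ^ 2) 1 with h | h
      · rw [min_eq_left h]
        nlinarith [sq_nonneg r, sq_nonneg ξ, sq_nonneg (r⁻¹)]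
      · rw [min_eq_right h]
        have : (r⁻¹) ^ 2 ≤ ξ ^ 2 := by
          nlinarith [sq_nonneg (r⁻¹)]
        linarith
    have hmin0' : 0 ≤ min (r ^ 2 * ξ ^ 2) 1 := le_min (by positivity) zero_le_one
    have hdiv : min (r ^ 2 * ξ ^ 2) 1 / ξ ^ 2 ≤ 2 / ((r⁻¹) ^ 2 + ξ ^ 2) :=
      (div_le_div_iff₀ hξ2pos hd).mpr (by nlinarith)
    calc min |r * ξ| 1 ^ 2 * (π / Real.sqrt (1 + ξ ^ 4))
        ≤ min (r ^ 2 * ξ ^ 2) 1 * (π / ξ ^ 2) :=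
          mul_le_mul step1 step2 (by positivity) hmin0'
      _ = π * (min (r ^ 2 * ξ ^ 2) 1 / ξ ^ 2) := by ring
      _ ≤ π * (2 / ((r⁻¹) ^ 2 + ξ ^ 2)) :=
          mul_le_mul_of_nonneg_left hdiv pi_pos.le
      _ = 2 * π * ((r⁻¹) ^ 2 + ξ ^ 2)⁻¹ := by ring

lemma term1 {r : ℝ} (hr : 0 < r) :
    ∫⁻ p : ℝ × ℝ, ENNReal.ofReal (min |r * p.1| 1 ^ 2 / (1 + p.2 ^ 2 + p.1 ^ 4))
      ≤ ENNReal.ofReal (64 * r) := by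
  have hcont : Continuous fun p : ℝ × ℝ =>
      min |r * p.1| 1 ^ 2 / (1 + p.2 ^ 2 + p.1 ^ 4) := by
    apply Continuous.div
    · fun_prop
    · fun_prop
    · intro p
      have : (0:ℝ) < 1 + p.2 ^ 2 + p.1 ^ 4 := by positivity
      exact this.ne'
  have hmeas : AEMeasurable
      (fun p : ℝ × ℝ => ENNReal.ofReal (min |r * p.1| 1 ^ 2 / (1 + p.2 ^ 2 + p.1 ^ 4)))
      ((volume : Measure ℝ).prod (volume : Measure ℝ)) :=
    (ENNReal.continuous_ofReal.comp hcont).measurable.aemeasurable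
  have h1 : ∫⁻ p : ℝ × ℝ, ENNReal.ofReal (min |r * p.1| 1 ^ 2 / (1 + p.2 ^ 2 + p.1 ^ 4))
      = ∫⁻ ξ : ℝ, ∫⁻ l : ℝ, ENNReal.ofReal (min |r * ξ| 1 ^ 2 / (1 + l ^ 2 + ξ ^ 4)) := by
    rw [Measure.volume_eq_prod]
    exact lintegral_prod _ hmeas
  have h2 : ∀ ξ : ℝ, ∫⁻ l : ℝ, ENNReal.ofReal (min |r * ξ| 1 ^ 2 / (1 + l ^ 2 + ξ ^ 4))
      = ENNReal.ofReal (min |r * ξ| 1 ^ 2 * (π / Real.sqrt (1 + ξ ^ 4))) := by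
    intro ξ
    have hd : (0:ℝ) < 1 + ξ ^ 4 := by nlinarith [pow_two_nonneg (ξ^2)]
    have hc : 0 < Real.sqrt (1 + ξ ^ 4) := Real.sqrt_pos.mpr hd
    have hc2 : Real.sqrt (1 + ξ ^ 4) ^ 2 = 1 + ξ ^ 4 := Real.sq_sqrt hd.le
    have hmin0 : 0 ≤ min |r * ξ| 1 := le_min (abs_nonneg _) zero_le_one
    have hform : ∀ l : ℝ, min |r * ξ| 1 ^ 2 / (1 + l ^ 2 + ξ ^ 4)
        = min |r * ξ| 1 ^ 2 * (Real.sqrt (1 + ξ ^ 4) ^ 2 + l ^ 2)⁻¹ := by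
      intro l
      rw [hc2, div_eq_mul_inv]
      ring_nf
    calc ∫⁻ l : ℝ, ENNReal.ofReal (min |r * ξ| 1 ^ 2 / (1 + l ^ 2 + ξ ^ 4))
        = ∫⁻ l : ℝ, ENNReal.ofReal (min |r * ξ| 1 ^ 2)
            * ENNReal.ofReal ((Real.sqrt (1 + ξ ^ 4) ^ 2 + l ^ 2)⁻¹) := by
          congr 1
          funext l
          rw [hform l, ENNReal.ofReal_mul (by positivity)]
      _ = ENNReal.ofReal (min |r * ξ| 1 ^ 2) * ENNReal.ofReal (π / Real.sqrt (1 + ξ ^ 4)) := by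
          rw [lintegral_const_mul' _ _ ENNReal.ofReal_ne_top, lint_cauchy hc]
      _ = ENNReal.ofReal (min |r * ξ| 1 ^ 2 * (π / Real.sqrt (1 + ξ ^ 4))) := by
          rw [← ENNReal.ofReal_mul (by positivity)]
  rw [h1]
  simp_rw [h2]
  have h3 : ∫⁻ ξ : ℝ, ((Icc (-1 : ℝ) 1).indicator (fun _ => ENNReal.ofReal (π * r)) ξ
        + ENNReal.ofReal (2 * π * ((r⁻¹) ^ 2 + ξ ^ 2)⁻¹))
      = ENNReal.ofReal (2 * (π * r)) + ENNReal.ofReal (2 * π * (π * r)) := by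
    rw [lintegral_add_left (measurable_const.indicator measurableSet_Icc)]
    congr 1
    · rw [lintegral_indicator measurableSet_Icc, setLIntegral_const, Real.volume_Icc]
      rw [show (1 : ℝ) - (-1) = 2 by norm_num, ← ENNReal.ofReal_mul (by positivity)]
      ring_nf
    · have : ∀ ξ : ℝ, ENNReal.ofReal (2 * π * ((r⁻¹) ^ 2 + ξ ^ 2)⁻¹)
          = ENNReal.ofReal (2 * π) * ENNReal.ofReal (((r⁻¹) ^ 2 + ξ ^ 2)⁻¹) := by
        intro ξ
        rw [← ENNReal.ofReal_mul (by positivity)]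
      simp_rw [this]
      rw [lintegral_const_mul' _ _ ENNReal.ofReal_ne_top, lint_cauchy (inv_pos.mpr hr),
        ← ENNReal.ofReal_mul (by positivity)]
      congr 1
      field_simp
  calc ∫⁻ ξ : ℝ, ENNReal.ofReal (min |r * ξ| 1 ^ 2 * (π / Real.sqrt (1 + ξ ^ 4)))
      ≤ ∫⁻ ξ : ℝ, ((Icc (-1 : ℝ) 1).indicator (fun _ => ENNReal.ofReal (π * r)) ξ
        + ENNReal.ofReal (2 * π * ((r⁻¹) ^ 2 + ξ ^ 2)⁻¹)) := lintegral_mono (key1 hr)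
    _ = ENNReal.ofReal (2 * (π * r)) + ENNReal.ofReal (2 * π * (π * r)) := h3
    _ ≤ ENNReal.ofReal (64 * r) := by
        rw [← ENNReal.ofReal_add (by positivity) (by positivity)]
        apply ENNReal.ofReal_le_ofReal
        have hπ : π ≤ 4 := Real.pi_le_four
        have h₁ : π * r ≤ 4 * r := mul_le_mul_of_nonneg_right hπ hr.le
        have h₂ : π * (π * r) ≤ 4 * (4 * r) :=
          mul_le_mul hπ h₁ (by positivity) (by norm_num)
        nlinarith

lemma inner2 (l : ℝ) :
    ∫⁻ ξ : ℝ, ENNReal.ofReal ((1 + l ^ 2 + ξ ^ 4)⁻¹)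
      ≤ ENNReal.ofReal (2 * π * ((1 + l ^ 2) ^ ((3:ℝ)/4))⁻¹) := by
  set c : ℝ := (1 + l ^ 2) ^ ((1:ℝ)/4) with hcdef
  have hb : (0:ℝ) < 1 + l ^ 2 := by positivity
  have hc : 0 < c := Real.rpow_pos_of_pos hb _
  have hc4 : c ^ 4 = 1 + l ^ 2 := by
    rw [hcdef, ← Real.rpow_natCast ((1 + l ^ 2) ^ ((1:ℝ)/4)) 4, ← Real.rpow_mul hb.le]
    norm_num
  have hc3 : c ^ 3 = (1 + l ^ 2) ^ ((3:ℝ)/4) := by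
    rw [hcdef, ← Real.rpow_natCast ((1 + l ^ 2) ^ ((1:ℝ)/4)) 3, ← Real.rpow_mul hb.le]
    norm_num
  have hpt : ∀ ξ : ℝ, (1 + l ^ 2 + ξ ^ 4)⁻¹ ≤ 2 / c ^ 2 * (c ^ 2 + ξ ^ 2)⁻¹ := by
    intro ξ
    have h1 : (0:ℝ) < c ^ 2 + ξ ^ 2 := by positivity
    have h2 : c ^ 2 * (c ^ 2 + ξ ^ 2) ≤ 2 * (1 + l ^ 2 + ξ ^ 4) := by
      nlinarith [sq_nonneg (c ^ 2 - ξ ^ 2), hc4, sq_nonneg ξ, sq_nonneg (ξ^2)]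
    have h3 : (1 + l ^ 2 + ξ ^ 4)⁻¹ ≤ 2 / (c ^ 2 * (c ^ 2 + ξ ^ 2)) := by
      rw [inv_eq_one_div, div_le_div_iff₀ (by positivity) (by positivity)]
      linarith
    calc (1 + l ^ 2 + ξ ^ 4)⁻¹ ≤ 2 / (c ^ 2 * (c ^ 2 + ξ ^ 2)) := h3
      _ = 2 / c ^ 2 * (c ^ 2 + ξ ^ 2)⁻¹ := by
          rw [div_mul_eq_div_div, div_eq_mul_inv]
  calc ∫⁻ ξ : ℝ, ENNReal.ofReal ((1 + l ^ 2 + ξ ^ 4)⁻¹)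
      ≤ ∫⁻ ξ : ℝ, ENNReal.ofReal (2 / c ^ 2 * (c ^ 2 + ξ ^ 2)⁻¹) :=
        lintegral_mono fun ξ => ENNReal.ofReal_le_ofReal (hpt ξ)
    _ = ENNReal.ofReal (2 / c ^ 2) * ∫⁻ ξ : ℝ, ENNReal.ofReal ((c ^ 2 + ξ ^ 2)⁻¹) := by
        simp_rw [ENNReal.ofReal_mul (show (0:ℝ) ≤ 2 / c ^ 2 by positivity)]
        rw [lintegral_const_mul' _ _ ENNReal.ofReal_ne_top]
    _ = ENNReal.ofReal (2 / c ^ 2) * ENNReal.ofReal (π / c) := by rw [lint_cauchy hc]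
    _ = ENNReal.ofReal (2 * π * ((1 + l ^ 2) ^ ((3:ℝ)/4))⁻¹) := by
        rw [← ENNReal.ofReal_mul (by positivity), ← hc3]
        congr 1
        field_simp

lemma min_sq_le {x : ℝ} (hx : 0 ≤ x) : min x 1 ^ 2 ≤ x ^ ((3:ℝ)/2) := by
  rcases le_total x 1 with h | h
  · rw [min_eq_left h]
    rcases eq_or_lt_of_le hx with h0 | h0
    · rw [← h0]
      rw [Real.zero_rpow (by norm_num)]
      norm_num
    · have : x ^ ((2:ℕ):ℝ) ≤ x ^ ((3:ℝ)/2) :=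
        Real.rpow_le_rpow_of_exponent_ge h0 h (by norm_num)
      rwa [Real.rpow_natCast] at this
  · rw [min_eq_right h, one_pow]
    have h1 : (1:ℝ) ^ ((3:ℝ)/2) ≤ x ^ ((3:ℝ)/2) :=
      Real.rpow_le_rpow zero_le_one h (by norm_num)
    rwa [Real.one_rpow] at h1

lemma abs_fact {l : ℝ} (hl : l ≠ 0) :
    ((1 + l ^ 2) ^ ((3:ℝ)/4))⁻¹ ≤ (|l| ^ ((3:ℝ)/2))⁻¹ := by
  have h0 : (0:ℝ) < |l| := abs_pos.mpr hl
  have h1 : |l| ^ ((3:ℝ)/2) = (l ^ 2) ^ ((3:ℝ)/4) := by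
    rw [← sq_abs, ← Real.rpow_natCast |l| 2, ← Real.rpow_mul (abs_nonneg l)]
    norm_num
  have h2 : (l ^ 2 : ℝ) ^ ((3:ℝ)/4) ≤ (1 + l ^ 2) ^ ((3:ℝ)/4) :=
    Real.rpow_le_rpow (sq_nonneg l) (by linarith) (by norm_num)
  apply inv_anti₀
  · rw [h1]; positivity
  · rw [h1]; exact h2

lemma key2 {r : ℝ} (hr : 0 < r) (l : ℝ) :
    ENNReal.ofReal (min |r ^ 2 * l| 1 ^ 2 * (2 * π * ((1 + l ^ 2) ^ ((3:ℝ)/4))⁻¹))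
      ≤ (Icc (-(max 1 (r ^ 2)⁻¹)) (max 1 (r ^ 2)⁻¹)).indicator
          (fun _ => ENNReal.ofReal (2 * π * (r / max 1 (r ^ 2)⁻¹))) l
        + ((Icc (-(max 1 (r ^ 2)⁻¹)) (max 1 (r ^ 2)⁻¹))ᶜ).indicator
          (fun x => ENNReal.ofReal (2 * π * |x| ^ (-(3/2) : ℝ))) l := by
  set M := max 1 (r ^ 2)⁻¹ with hMdef
  have hM1 : (1:ℝ) ≤ M := le_max_left _ _
  have hM0 : (0:ℝ) < M := zero_lt_one.trans_le hM1
  have hmin0 : 0 ≤ min |r ^ 2 * l| 1 := le_min (abs_nonneg _) zero_le_one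
  have hbase : (0:ℝ) < 1 + l ^ 2 := by positivity
  have hrpow1 : (1:ℝ) ≤ (1 + l ^ 2) ^ ((3:ℝ)/4) := by
    have := Real.rpow_le_rpow zero_le_one (show (1:ℝ) ≤ 1 + l ^ 2 by nlinarith) (by norm_num : (0:ℝ) ≤ 3/4)
    rwa [Real.one_rpow] at this
  by_cases hmem : l ∈ Icc (-M) M
  · rw [indicator_of_mem hmem, indicator_of_notMem (by simp [hmem]), add_zero]
    apply ENNReal.ofReal_le_ofReal
    have hmain : min |r ^ 2 * l| 1 ^ 2 * ((1 + l ^ 2) ^ ((3:ℝ)/4))⁻¹ ≤ r / M := by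
      rcases le_total ((r ^ 2)⁻¹ : ℝ) 1 with hs | hs
      · -- r ≥ 1, M = 1
        have hM : M = 1 := max_eq_left hs
        have hinv : (r ^ 2)⁻¹ * r ^ 2 = 1 := inv_mul_cancel₀ (by positivity)
        have h1r2 : (1:ℝ) ≤ r ^ 2 := by nlinarith [sq_nonneg r]
        have hr1 : (1:ℝ) ≤ r := by nlinarith
        have b1 : min |r ^ 2 * l| 1 ^ 2 ≤ 1 := by
          calc min |r ^ 2 * l| 1 ^ 2 ≤ 1 ^ 2 := pow_le_pow_left₀ hmin0 (min_le_right _ _) 2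
            _ = 1 := one_pow 2
        have b2 : ((1 + l ^ 2) ^ ((3:ℝ)/4))⁻¹ ≤ 1 := by
          apply inv_le_one_of_one_le₀ hrpow1
        calc min |r ^ 2 * l| 1 ^ 2 * ((1 + l ^ 2) ^ ((3:ℝ)/4))⁻¹
            ≤ 1 * 1 := mul_le_mul b1 b2 (by positivity) zero_le_one
          _ = 1 := by norm_num
          _ ≤ r / M := by rw [hM, div_one]; exact hr1
      · -- r ≤ 1, M = (r²)⁻¹
        have hM : M = (r ^ 2)⁻¹ := max_eq_right hs
        have hrM : r / M = r ^ 3 := by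
          rw [hM]
          field_simp
        rcases eq_or_ne l 0 with h0 | h0
        · subst h0
          have hz : min |r ^ 2 * (0:ℝ)| 1 ^ 2 * ((1 + (0:ℝ) ^ 2) ^ ((3:ℝ)/4))⁻¹ = 0 := by
            norm_num
          rw [hz]
          positivity
        · have habs : |r ^ 2 * l| = r ^ 2 * |l| := by
            rw [abs_mul, abs_of_pos (by positivity : (0:ℝ) < r ^ 2)]
          have h1 : min |r ^ 2 * l| 1 ^ 2 ≤ (r ^ 2 * |l|) ^ ((3:ℝ)/2) := by
            rw [habs]; exact min_sq_le (by positivity)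
          have h2 := abs_fact h0
          have h3 : (r ^ 2 * |l|) ^ ((3:ℝ)/2) = (r ^ 2) ^ ((3:ℝ)/2) * |l| ^ ((3:ℝ)/2) :=
            Real.mul_rpow (by positivity) (abs_nonneg l)
          have habs0 : (0:ℝ) < |l| ^ ((3:ℝ)/2) := Real.rpow_pos_of_pos (abs_pos.mpr h0) _
          have hr3 : (r ^ 2 : ℝ) ^ ((3:ℝ)/2) = r ^ 3 := by
            rw [← Real.rpow_natCast r 2, ← Real.rpow_mul hr.le, ← Real.rpow_natCast r 3]
            norm_num
          calc min |r ^ 2 * l| 1 ^ 2 * ((1 + l ^ 2) ^ ((3:ℝ)/4))⁻¹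
              ≤ (r ^ 2 * |l|) ^ ((3:ℝ)/2) * (|l| ^ ((3:ℝ)/2))⁻¹ :=
                mul_le_mul h1 h2 (by positivity) (by positivity)
            _ = r ^ 3 := by
                rw [h3, hr3, mul_assoc, mul_inv_cancel₀ habs0.ne', mul_one]
            _ = r / M := hrM.symm
    calc min |r ^ 2 * l| 1 ^ 2 * (2 * π * ((1 + l ^ 2) ^ ((3:ℝ)/4))⁻¹)
        = 2 * π * (min |r ^ 2 * l| 1 ^ 2 * ((1 + l ^ 2) ^ ((3:ℝ)/4))⁻¹) := by ring
      _ ≤ 2 * π * (r / M) := mul_le_mul_of_nonneg_left hmain (by positivity)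
  · rw [indicator_of_notMem hmem, indicator_of_mem (mem_compl hmem), zero_add]
    apply ENNReal.ofReal_le_ofReal
    have hMl : M < |l| := by
      have hor : l < -M ∨ M < l := by
        by_contra hcon
        push_neg at hcon
        exact hmem (mem_Icc.mpr ⟨by linarith [hcon.1], hcon.2⟩)
      rcases hor with h | h
      · calc M < -l := by linarith
          _ ≤ |l| := neg_le_abs l
      · exact h.trans_le (le_abs_self l)
    have hl0 : l ≠ 0 := by
      intro h; rw [h, abs_zero] at hMl; linarith
    have b1 : min |r ^ 2 * l| 1 ^ 2 ≤ 1 := by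
      calc min |r ^ 2 * l| 1 ^ 2 ≤ 1 ^ 2 := pow_le_pow_left₀ hmin0 (min_le_right _ _) 2
        _ = 1 := one_pow 2
    have h2 := abs_fact hl0
    have hneg : |l| ^ (-(3/2) : ℝ) = (|l| ^ ((3:ℝ)/2))⁻¹ := by
      rw [← Real.rpow_neg (abs_nonneg l)]
    calc min |r ^ 2 * l| 1 ^ 2 * (2 * π * ((1 + l ^ 2) ^ ((3:ℝ)/4))⁻¹)
        ≤ 1 * (2 * π * (|l| ^ ((3:ℝ)/2))⁻¹) := by
          apply mul_le_mul b1 _ (by positivity) zero_le_one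
          apply mul_le_mul_of_nonneg_left h2 (by positivity)
      _ = 2 * π * |l| ^ (-(3/2) : ℝ) := by rw [one_mul, hneg]

lemma term2 {r : ℝ} (hr : 0 < r) :
    ∫⁻ p : ℝ × ℝ, ENNReal.ofReal (min |r ^ 2 * p.2| 1 ^ 2 / (1 + p.2 ^ 2 + p.1 ^ 4))
      ≤ ENNReal.ofReal (49 * r) := by
  set M := max 1 (r ^ 2)⁻¹ with hMdef
  have hM1 : (1:ℝ) ≤ M := le_max_left _ _
  have hM0 : (0:ℝ) < M := zero_lt_one.trans_le hM1
  have hcont : Continuous fun p : ℝ × ℝ =>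
      min |r ^ 2 * p.2| 1 ^ 2 / (1 + p.2 ^ 2 + p.1 ^ 4) := by
    apply Continuous.div
    · fun_prop
    · fun_prop
    · intro p
      have : (0:ℝ) < 1 + p.2 ^ 2 + p.1 ^ 4 := by positivity
      exact this.ne'
  have hmeas : AEMeasurable
      (fun p : ℝ × ℝ => ENNReal.ofReal (min |r ^ 2 * p.2| 1 ^ 2 / (1 + p.2 ^ 2 + p.1 ^ 4)))
      ((volume : Measure ℝ).prod (volume : Measure ℝ)) :=
    (ENNReal.continuous_ofReal.comp hcont).measurable.aemeasurable
  have h1 : ∫⁻ p : ℝ × ℝ, ENNReal.ofReal (min |r ^ 2 * p.2| 1 ^ 2 / (1 + p.2 ^ 2 + p.1 ^ 4))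
      = ∫⁻ l : ℝ, ∫⁻ ξ : ℝ, ENNReal.ofReal (min |r ^ 2 * l| 1 ^ 2 / (1 + l ^ 2 + ξ ^ 4)) := by
    rw [Measure.volume_eq_prod]
    exact lintegral_prod_symm _ hmeas
  have h2 : ∀ l : ℝ, ∫⁻ ξ : ℝ, ENNReal.ofReal (min |r ^ 2 * l| 1 ^ 2 / (1 + l ^ 2 + ξ ^ 4))
      ≤ ENNReal.ofReal (min |r ^ 2 * l| 1 ^ 2 * (2 * π * ((1 + l ^ 2) ^ ((3:ℝ)/4))⁻¹)) := by
    intro l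
    have hmin0 : 0 ≤ min |r ^ 2 * l| 1 ^ 2 := by positivity
    calc ∫⁻ ξ : ℝ, ENNReal.ofReal (min |r ^ 2 * l| 1 ^ 2 / (1 + l ^ 2 + ξ ^ 4))
        = ENNReal.ofReal (min |r ^ 2 * l| 1 ^ 2)
            * ∫⁻ ξ : ℝ, ENNReal.ofReal ((1 + l ^ 2 + ξ ^ 4)⁻¹) := by
          rw [← lintegral_const_mul' _ _ ENNReal.ofReal_ne_top]
          congr 1
          funext ξ
          rw [← ENNReal.ofReal_mul hmin0, div_eq_mul_inv]
      _ ≤ ENNReal.ofReal (min |r ^ 2 * l| 1 ^ 2)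
            * ENNReal.ofReal (2 * π * ((1 + l ^ 2) ^ ((3:ℝ)/4))⁻¹) :=
          mul_le_mul_right (inner2 l) _
      _ = ENNReal.ofReal (min |r ^ 2 * l| 1 ^ 2 * (2 * π * ((1 + l ^ 2) ^ ((3:ℝ)/4))⁻¹)) := by
          rw [← ENNReal.ofReal_mul hmin0]
  have hMr : M ^ (-(1/2) : ℝ) ≤ r := by
    rcases le_total ((r ^ 2)⁻¹ : ℝ) 1 with hs | hs
    · have hM : M = 1 := max_eq_left hs
      have hinv : (r ^ 2)⁻¹ * r ^ 2 = 1 := inv_mul_cancel₀ (by positivity)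
      have h1r2 : (1:ℝ) ≤ r ^ 2 := by nlinarith [sq_nonneg r]
      have hr1 : (1:ℝ) ≤ r := by nlinarith
      rw [hM, Real.one_rpow]
      exact hr1
    · have hM : M = (r ^ 2)⁻¹ := max_eq_right hs
      have heq : ((r ^ 2)⁻¹ : ℝ) ^ (-(1/2) : ℝ) = r := by
        rw [← Real.rpow_natCast r 2, ← Real.rpow_neg_one (r ^ ((2:ℕ):ℝ)),
          ← Real.rpow_mul hr.le, ← Real.rpow_mul hr.le]
        norm_num
      rw [hM, heq]
  have h3 : ∫⁻ l : ℝ, ((Icc (-M) M).indicator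
        (fun _ => ENNReal.ofReal (2 * π * (r / M))) l
      + ((Icc (-M) M)ᶜ).indicator
        (fun x => ENNReal.ofReal (2 * π * |x| ^ (-(3/2) : ℝ))) l)
      ≤ ENNReal.ofReal (4 * π * r) + ENNReal.ofReal (8 * π * r) := by
    rw [lintegral_add_left (measurable_const.indicator measurableSet_Icc)]
    apply add_le_add
    · rw [lintegral_indicator measurableSet_Icc, setLIntegral_const, Real.volume_Icc]
      rw [show M - -M = 2 * M by ring, ← ENNReal.ofReal_mul (by positivity)]
      apply ENNReal.ofReal_le_ofReal
      rw [show 2 * π * (r / M) * (2 * M) = 4 * π * r * (M / M) by ring,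
        div_self hM0.ne', mul_one]
    · rw [lintegral_indicator measurableSet_Icc.compl]
      have hsplit : ∀ x : ℝ, ENNReal.ofReal (2 * π * |x| ^ (-(3/2) : ℝ))
          = ENNReal.ofReal (2 * π) * ENNReal.ofReal (|x| ^ (-(3/2) : ℝ)) := by
        intro x
        rw [← ENNReal.ofReal_mul (by positivity)]
      simp_rw [hsplit]
      rw [lintegral_const_mul' _ _ ENNReal.ofReal_ne_top, lint_tail hM0,
        ← ENNReal.ofReal_mul (by positivity)]
      apply ENNReal.ofReal_le_ofReal
      calc 2 * π * (4 * M ^ (-(1/2) : ℝ)) = 8 * π * M ^ (-(1/2) : ℝ) := by ring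
        _ ≤ 8 * π * r := by
            apply mul_le_mul_of_nonneg_left hMr (by positivity)
  calc ∫⁻ p : ℝ × ℝ, ENNReal.ofReal (min |r ^ 2 * p.2| 1 ^ 2 / (1 + p.2 ^ 2 + p.1 ^ 4))
      = ∫⁻ l : ℝ, ∫⁻ ξ : ℝ, ENNReal.ofReal (min |r ^ 2 * l| 1 ^ 2 / (1 + l ^ 2 + ξ ^ 4)) := h1
    _ ≤ ∫⁻ l : ℝ, ENNReal.ofReal (min |r ^ 2 * l| 1 ^ 2 * (2 * π * ((1 + l ^ 2) ^ ((3:ℝ)/4))⁻¹)) :=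
        lintegral_mono h2
    _ ≤ ∫⁻ l : ℝ, ((Icc (-M) M).indicator
          (fun _ => ENNReal.ofReal (2 * π * (r / M))) l
        + ((Icc (-M) M)ᶜ).indicator
          (fun x => ENNReal.ofReal (2 * π * |x| ^ (-(3/2) : ℝ))) l) :=
        lintegral_mono (key2 hr)
    _ ≤ ENNReal.ofReal (4 * π * r) + ENNReal.ofReal (8 * π * r) := h3
    _ ≤ ENNReal.ofReal (49 * r) := by
        rw [← ENNReal.ofReal_add (by positivity) (by positivity)]
        apply ENNReal.ofReal_le_ofReal
        nlinarith [Real.pi_le_four, hr.le, mul_le_mul_of_nonneg_right Real.pi_le_four hr.le]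

/-- With `m(ξ,l) = (1 + l² + ξ⁴)^{1/2}` and `V(x) = min{|x|,1}`, there is `C > 0` such that
`‖m⁻¹ V(rξ)‖_{L²(ℝ²)} + ‖m⁻¹ V(r²l)‖_{L²(ℝ²)} ≤ C √r` for all `r > 0`. -/
theorem stmt_11 :
    ∃ C : ℝ, 0 < C ∧ ∀ r : ℝ, 0 < r →
      MeasureTheory.eLpNorm
          (fun p : ℝ × ℝ => min |r * p.1| 1 / Real.sqrt (1 + p.2 ^ 2 + p.1 ^ 4))
          2 MeasureTheory.volume
        + MeasureTheory.eLpNorm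
          (fun p : ℝ × ℝ => min |r ^ 2 * p.2| 1 / Real.sqrt (1 + p.2 ^ 2 + p.1 ^ 4))
          2 MeasureTheory.volume
      ≤ ENNReal.ofReal (C * Real.sqrt r) := by
  refine ⟨15, by norm_num, fun r hr => ?_⟩
  have hD : ∀ p : ℝ × ℝ, (0:ℝ) < 1 + p.2 ^ 2 + p.1 ^ 4 := fun p => by positivity
  have hs : ∀ p : ℝ × ℝ, (0:ℝ) < Real.sqrt (1 + p.2 ^ 2 + p.1 ^ 4) :=
    fun p => Real.sqrt_pos.mpr (hD p)
  have hf1cont : Continuous fun p : ℝ × ℝ =>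
      min |r * p.1| 1 / Real.sqrt (1 + p.2 ^ 2 + p.1 ^ 4) := by
    apply Continuous.div
    · fun_prop
    · fun_prop
    · exact fun p => (hs p).ne'
  have hf2cont : Continuous fun p : ℝ × ℝ =>
      min |r ^ 2 * p.2| 1 / Real.sqrt (1 + p.2 ^ 2 + p.1 ^ 4) := by
    apply Continuous.div
    · fun_prop
    · fun_prop
    · exact fun p => (hs p).ne'
  have h1 : eLpNorm
      (fun p : ℝ × ℝ => min |r * p.1| 1 / Real.sqrt (1 + p.2 ^ 2 + p.1 ^ 4))
      2 volume ≤ ENNReal.ofReal (8 * Real.sqrt r) := by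
    apply eLp_le hf1cont.measurable.aemeasurable
      (fun p => by positivity) (by positivity)
    have hA : (8 * Real.sqrt r) ^ 2 = 64 * r := by
      rw [mul_pow, Real.sq_sqrt hr.le]; norm_num
    rw [hA]
    have hpt : ∀ p : ℝ × ℝ,
        (min |r * p.1| 1 / Real.sqrt (1 + p.2 ^ 2 + p.1 ^ 4)) ^ 2
          = min |r * p.1| 1 ^ 2 / (1 + p.2 ^ 2 + p.1 ^ 4) := by
      intro p
      rw [div_pow, Real.sq_sqrt (hD p).le]
    simp_rw [hpt]
    exact term1 hr
  have h2 : eLpNorm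
      (fun p : ℝ × ℝ => min |r ^ 2 * p.2| 1 / Real.sqrt (1 + p.2 ^ 2 + p.1 ^ 4))
      2 volume ≤ ENNReal.ofReal (7 * Real.sqrt r) := by
    apply eLp_le hf2cont.measurable.aemeasurable
      (fun p => by positivity) (by positivity)
    have hA : (7 * Real.sqrt r) ^ 2 = 49 * r := by
      rw [mul_pow, Real.sq_sqrt hr.le]; norm_num
    rw [hA]
    have hpt : ∀ p : ℝ × ℝ,
        (min |r ^ 2 * p.2| 1 / Real.sqrt (1 + p.2 ^ 2 + p.1 ^ 4)) ^ 2
          = min |r ^ 2 * p.2| 1 ^ 2 / (1 + p.2 ^ 2 + p.1 ^ 4) := by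
      intro p
      rw [div_pow, Real.sq_sqrt (hD p).le]
    simp_rw [hpt]
    exact term2 hr
  calc _ ≤ ENNReal.ofReal (8 * Real.sqrt r) + ENNReal.ofReal (7 * Real.sqrt r) :=
        add_le_add h1 h2
    _ = ENNReal.ofReal (15 * Real.sqrt r) := by
        rw [← ENNReal.ofReal_add (by positivity) (by positivity)]
        congr 1
        ring
end
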